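/- arXiv:2008.05719 — 2 statements merged into one kernel-verified Lean document; each statement's English description precedes it below -/
import Mathlib

section
/- Let L/K be a finite unramified abelian extension of a Henselian discrete valuation field K. Then for every n ≥ 1, the norm map satisfies N_{L/K}(U_n(L)) = U_n(K). In particular, the norm subgroup N_{L/K}(L^×) is an open subgroup of K^×. -/
/-!
Since `L/K` is unramified, `𝔪_B^n = ϖ^n B` for a uniformizer `ϖ` of `A`, and everything follows
from the expansion of the norm as a determinant, `N(1 + s e) = 1 + Tr(e) s + s² P(s)` with
`P ∈ A[X]`. It gives `N(1 + ϖ^n x) ≡ 1 mod ϖ^n` at once. Conversely, the residue extension is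
separable, so its trace is onto and some `e ∈ B` has unit trace; then
`N(1 + ϖ^n t e) = 1 + ϖ^n c` becomes `Tr(e) t + ϖ^n t² P(ϖ^n t) = c`, a small perturbation of a
linear equation with unit slope, which Hensel's lemma solves in `A`.
-/

/-- The higher unit group `U_m(K) = 1 + 𝔪_K^m` (with `U_0(K) = O_K^×`), as a subgroup
of `K^×`: the subgroup generated — indeed, consisting — of the units `v` of the
valuation ring `A` with `v - 1 ∈ 𝔪_A^m`. -/
noncomputable def Um (A : Type*) [CommRing A] [IsDomain A] [IsDiscreteValuationRing A]
    (K : Type*) [Field K] [Algebra A K] [IsFractionRing A K] (m : ℕ) : Subgroup Kˣ :=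
  Subgroup.closure {u : Kˣ | ∃ v : Aˣ, algebraMap A K (v : A) = (u : K) ∧
    ((v : A) - 1) ∈ (IsLocalRing.maximalIdeal A) ^ m}

open IsLocalRing Polynomial nonZeroDivisors

section Hensel

variable {R : Type*} [CommRing R]

theorem Polynomial.comp_C_coeff_zero_mul_X (f : R[X]) :
    f.comp (C (f.coeff 0) * X) = C (f.coeff 0) * (1 + X * f.divX.comp (C (f.coeff 0) * X)) := by
  nth_rw 1 [← X_mul_divX_add f]
  simp only [add_comp, mul_comp, X_comp, C_comp]
  ring

theorem Polynomial.reflect_one_add_X_mul_C (n : ℕ) (a : R) :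
    reflect (n + 1) (1 + X * C a) = X ^ n * (X + C a) := by
  rw [reflect_add, reflect_one, mul_comm, ← pow_one X, reflect_C_mul_X_pow, revAt_le (by omega)]
  simp only [add_tsub_cancel_right, pow_one]
  ring

variable [HenselianLocalRing R]

theorem HenselianLocalRing.exists_isRoot_of_coeff_zero_mem (f : R[X])
    (h₀ : f.coeff 0 ∈ maximalIdeal R) (h₁ : IsUnit (f.coeff 1)) :
    ∃ x ∈ maximalIdeal R, f.IsRoot x := by
  -- With `c = f(0)`, `f(cY) = c p(Y)` where `p(0) = 1`; the reversal `r` of `p` is monic and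
  -- reduces to `X^n (X + f'(0))`, so Hensel gives a unit root `s` of `r`, and `x = c / s`.
  set c := f.coeff 0
  set a := f.coeff 1
  set p : R[X] := 1 + X * f.divX.comp (C c * X)
  set n := p.natDegree
  set r := reflect (n + 1) p
  have hr : r.Monic := by
    refine monic_of_natDegree_le_of_coeff_eq_one (n + 1) (natDegree_reflect_le.trans (by omega)) ?_
    simp [r, coeff_reflect, p]
  have hr_mod : r.map (residue R) = X ^ n * (X + C (residue R a)) := by
    have hc : residue R c = 0 := (residue_eq_zero_iff c).mpr h₀
    rw [← reflect_one_add_X_mul_C, ← reflect_map]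
    simp only [p, Polynomial.map_add, Polynomial.map_one, Polynomial.map_mul, map_X, map_comp,
      map_C, hc, C_0, zero_mul, comp_zero, ← coeff_zero_eq_eval_zero, coeff_map, coeff_divX,
      zero_add, a]
  have ha : residue R a ≠ 0 := (residue_ne_zero_iff_isUnit a).mpr h₁
  have hr_root : residue R (r.eval (-a)) = 0 := by
    rw [← eval_map_apply, hr_mod]
    simp
  have hr_deriv : residue R (r.derivative.eval (-a)) = (-residue R a) ^ n := by
    rw [← eval_map_apply, ← derivative_map, hr_mod]
    simp
  obtain ⟨s, hs, hsa⟩ := HenselianLocalRing.is_henselian r hr (-a)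
    ((residue_eq_zero_iff _).mp hr_root)
    ((residue_ne_zero_iff_isUnit _).mp (by rw [hr_deriv]; exact pow_ne_zero _ (neg_ne_zero.mpr ha)))
  have hsu : IsUnit s := by
    have : residue R s = residue R (-a) := by
      rw [← sub_eq_zero, ← map_sub, residue_eq_zero_iff]
      exact hsa
    rw [← residue_ne_zero_iff_isUnit, this, map_neg]
    exact neg_ne_zero.mpr ha
  let := hsu.invertible
  have hp : p.eval (⅟s) = 0 := by
    have := eval₂_reflect_mul_pow (RingHom.id R) (⅟s) (n + 1) p (by omega)
    rwa [invOf_invOf, ← eval, ← eval, hs.eq_zero, zero_mul, eq_comm] at this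
  refine ⟨c * ⅟s, Ideal.mul_mem_right _ _ h₀, ?_⟩
  calc f.eval (c * ⅟s) = (f.comp (C c * X)).eval (⅟s) := by simp [eval_comp]
    _ = c * p.eval (⅟s) := by rw [comp_C_coeff_zero_mul_X, eval_mul, eval_C]
    _ = 0 := by rw [hp, mul_zero]

theorem HenselianLocalRing.exists_isRoot_of_isUnit_derivative (f : R[X]) (a₀ : R)
    (h₁ : f.eval a₀ ∈ maximalIdeal R) (h₂ : IsUnit (f.derivative.eval a₀)) :
    ∃ a, f.IsRoot a ∧ a - a₀ ∈ maximalIdeal R := by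
  obtain ⟨x, hx, hroot⟩ := exists_isRoot_of_coeff_zero_mem (taylor a₀ f)
    (by rwa [taylor_coeff_zero]) (by rwa [taylor_coeff_one])
  exact ⟨x + a₀, by rwa [IsRoot, ← taylor_eval], by rwa [add_sub_cancel_right]⟩

theorem HenselianLocalRing.exists_mul_add_mul_eval_eq {u π : R} (hu : IsUnit u)
    (hπ : π ∈ maximalIdeal R) (g : R[X]) (c : R) : ∃ t, u * t + π * g.eval t = c := by
  let f := C u * X + C π * g - C c
  have hf : ∀ t, f.eval t = u * t + π * g.eval t - c := fun t => by simp [f]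
  have hf' : ∀ t, f.derivative.eval t = u + π * g.derivative.eval t := fun t => by
    simp [f, derivative_mul]
  obtain ⟨t, ht, -⟩ := exists_isRoot_of_isUnit_derivative f (↑hu.unit⁻¹ * c)
    (by rw [hf, ← mul_assoc, hu.mul_val_inv, one_mul, add_sub_cancel_left]
        exact Ideal.mul_mem_right _ _ hπ)
    (by rw [hf', ← residue_ne_zero_iff_isUnit, map_add, map_mul,
          (residue_eq_zero_iff π).mpr hπ, zero_mul, add_zero]
        exact (residue_ne_zero_iff_isUnit u).mpr hu)
  exact ⟨t, sub_eq_zero.mp ((hf t).symm.trans ht)⟩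

end Hensel

namespace Ideal
variable {R : Type*} [CommRing R]

def principalUnits (I : Ideal R) : Subgroup Rˣ :=
  (Units.map (Ideal.Quotient.mk I).toMonoidHom).ker

theorem mem_principalUnits {I : Ideal R} {u : Rˣ} :
    u ∈ I.principalUnits ↔ (u : R) - 1 ∈ I := by
  rw [principalUnits, MonoidHom.mem_ker, Units.ext_iff, ← Ideal.Quotient.eq, Units.coe_map,
    Units.val_one, map_one]
  rfl

end Ideal

theorem Um_eq_map (A : Type*) [CommRing A] [IsDomain A] [IsDiscreteValuationRing A]
    (K : Type*) [Field K] [Algebra A K] [IsFractionRing A K] (m : ℕ) :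
    Um A K m =
      ((maximalIdeal A ^ m).principalUnits).map (Units.map (algebraMap A K).toMonoidHom) := by
  rw [Um, ← Subgroup.closure_eq (Subgroup.map _ _)]
  congr 1
  ext u
  simp [Ideal.mem_principalUnits, Units.ext_iff, and_comm]

section Norm
variable {A B : Type*} [CommRing A] [CommRing B] [Algebra A B] [Module.Free A B] [Module.Finite A B]

theorem Algebra.exists_norm_one_add_smul (e : B) : ∃ P : A[X], ∀ s : A,
    Algebra.norm A (1 + s • e) = 1 + Algebra.trace A B e * s + P.eval s * s ^ 2 := by
  classical
  let b := Module.Free.chooseBasis A B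
  refine ⟨(1 + (X : A[X]) • (Algebra.leftMulMatrix b e).map C).det.divX.divX, fun s => ?_⟩
  rw [Algebra.norm_eq_matrix_det b, Algebra.trace_eq_matrix_trace b, map_add, map_one, map_smul]
  exact Matrix.det_one_add_smul s _

theorem Algebra.dvd_norm_one_add_smul_sub_one (a : A) (x : B) :
    a ∣ Algebra.norm A (1 + a • x) - 1 := by
  obtain ⟨P, hP⟩ := exists_norm_one_add_smul (A := A) x
  exact ⟨Algebra.trace A B x + P.eval a * a, by rw [hP]; ring⟩

theorem map_norm_principalUnits_span_le (π : A) :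
    (Ideal.span {algebraMap A B π}).principalUnits.map (Units.map (Algebra.norm A : B →* A)) ≤
      (Ideal.span {π}).principalUnits := by
  rintro _ ⟨w, hw, rfl⟩
  obtain ⟨x, hx⟩ := Ideal.mem_span_singleton'.mp (Ideal.mem_principalUnits.mp hw)
  have hw_eq : (w : B) = 1 + π • x := by rw [Algebra.smul_def, mul_comm, hx]; ring
  rw [Ideal.mem_principalUnits, Units.coe_map, hw_eq, Ideal.mem_span_singleton]
  exact Algebra.dvd_norm_one_add_smul_sub_one π x

theorem le_map_norm_principalUnits_span [HenselianLocalRing A] [IsLocalRing B]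
    [IsLocalHom (algebraMap A B)] {e : B} (he : IsUnit (Algebra.trace A B e)) {π : A}
    (hπ : π ∈ maximalIdeal A) :
    (Ideal.span {π}).principalUnits ≤
      (Ideal.span {algebraMap A B π}).principalUnits.map
        (Units.map (Algebra.norm A : B →* A)) := by
  intro v hv
  obtain ⟨c, hc⟩ := Ideal.mem_span_singleton'.mp (Ideal.mem_principalUnits.mp hv)
  obtain ⟨P, hP⟩ := Algebra.exists_norm_one_add_smul (A := A) e
  obtain ⟨t, ht⟩ := HenselianLocalRing.exists_mul_add_mul_eval_eq he hπ
    (X ^ 2 * P.comp (C π * X)) c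
  have hnorm : Algebra.norm A (1 + (π * t) • e) = v := by
    simp only [eval_mul, eval_pow, eval_X, eval_comp, eval_C] at ht
    rw [hP]
    linear_combination π * ht + hc
  have hmem : (π * t) • e ∈ maximalIdeal B := by
    rw [Algebra.smul_def]
    exact Ideal.mul_mem_right _ _ (map_nonunit _ _ (Ideal.mul_mem_right _ _ hπ))
  have hunit : IsUnit (1 + (π * t) • e) := by
    simpa using isUnit_one_sub_self_of_mem_nonunits _ (neg_mem hmem)
  refine ⟨hunit.unit, ?_, Units.ext hnorm⟩
  rw [SetLike.mem_coe, Ideal.mem_principalUnits, IsUnit.unit_spec, add_sub_cancel_left,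
    Ideal.mem_span_singleton']
  exact ⟨algebraMap A B t * e, by rw [Algebra.smul_def, map_mul]; ring⟩

end Norm

section Trace

variable {A B : Type*} [CommRing A] [IsLocalRing A] [CommRing B] [IsLocalRing B] [Algebra A B]
  [IsLocalHom (algebraMap A B)] [Module.Free A B] [Module.Finite A B]

theorem residue_trace (hram : (maximalIdeal A).map (algebraMap A B) = maximalIdeal B) (x : B) :
    residue A (Algebra.trace A B x) =
      Algebra.trace (ResidueField A) (ResidueField B) (residue B x) := by
  let e₁ : (A ⧸ maximalIdeal A) ≃+* ResidueField A := RingEquiv.refl _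
  let e₂ : (B ⧸ (maximalIdeal A).map (algebraMap A B)) ≃+* ResidueField B :=
    Ideal.quotEquivOfEq hram
  have he : (algebraMap (ResidueField A) (ResidueField B)).comp (e₁ : _ →+* _) =
      (e₂ : B ⧸ (maximalIdeal A).map (algebraMap A B) →+* ResidueField B).comp
        (algebraMap (A ⧸ maximalIdeal A) _) := by
    ext a
    exact (Ideal.quotEquivOfEq_mk hram _).symm
  have := Algebra.trace_eq_of_equiv_equiv e₁ e₂ he (Ideal.Quotient.mk _ x)
  rw [Algebra.trace_quotient_mk] at this
  exact this

theorem exists_isUnit_trace (hram : (maximalIdeal A).map (algebraMap A B) = maximalIdeal B)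
    [Algebra.IsSeparable (ResidueField A) (ResidueField B)] :
    ∃ e : B, IsUnit (Algebra.trace A B e) := by
  obtain ⟨ξ, hξ⟩ := Algebra.trace_surjective (ResidueField A) (ResidueField B) 1
  obtain ⟨e, rfl⟩ := residue_surjective ξ
  refine ⟨e, (residue_ne_zero_iff_isUnit _).mp ?_⟩
  rw [residue_trace hram, hξ]
  exact one_ne_zero

end Trace

theorem ResidueField.toAlgebra_map_algebraMap (A B : Type*) [CommRing A] [IsLocalRing A]
    [CommRing B] [IsLocalRing B] [Algebra A B] [IsLocalHom (algebraMap A B)] :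
    (ResidueField.map (algebraMap A B)).toAlgebra = ResidueField.instAlgebra := by
  refine Algebra.algebra_ext _ _ fun x => ?_
  obtain ⟨a, rfl⟩ := residue_surjective x
  exact ResidueField.map_residue _ a

theorem unitsMap_norm_comp_unitsMap_algebraMap (A K B L : Type*) [CommRing A] [Field K]
    [Algebra A K] [IsFractionRing A K] [CommRing B] [Field L] [Algebra B L] [Algebra K L]
    [Algebra A L] [Algebra A B] [IsScalarTower A K L] [IsScalarTower A B L]
    [IsLocalization (Algebra.algebraMapSubmonoid B A⁰) L] [Module.Free A B] [Module.Finite A B] :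
    (Units.map (Algebra.norm K : L →* K)).comp (Units.map (algebraMap B L).toMonoidHom) =
      (Units.map (algebraMap A K).toMonoidHom).comp (Units.map (Algebra.norm A : B →* A)) := by
  ext u
  exact Algebra.norm_localization A A⁰ (u : B)

theorem map_norm_Um (A K B L : Type*) [CommRing A] [IsDomain A] [IsDiscreteValuationRing A]
    [HenselianLocalRing A] [Field K] [Algebra A K] [IsFractionRing A K] [CommRing B] [IsDomain B]
    [IsDiscreteValuationRing B] [Field L] [Algebra B L] [IsFractionRing B L] [Algebra K L]
    [Algebra A L] [Algebra A B] [IsScalarTower A K L] [IsScalarTower A B L]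
    [IsLocalHom (algebraMap A B)] [Module.Free A B] [Module.Finite A B]
    [IsLocalization (Algebra.algebraMapSubmonoid B A⁰) L]
    (hram : (maximalIdeal A).map (algebraMap A B) = maximalIdeal B) {e : B}
    (he : IsUnit (Algebra.trace A B e)) {n : ℕ} (hn : 1 ≤ n) :
    (Um B L n).map (Units.map (Algebra.norm K : L →* K)) = Um A K n := by
  obtain ⟨ϖ, hϖ⟩ := IsDiscreteValuationRing.exists_irreducible A
  have hA : maximalIdeal A ^ n = Ideal.span {ϖ ^ n} := by
    rw [(IsDiscreteValuationRing.irreducible_iff_uniformizer ϖ).mp hϖ, Ideal.span_singleton_pow]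
  have hB : maximalIdeal B ^ n = Ideal.span {algebraMap A B (ϖ ^ n)} := by
    rw [← hram, ← Ideal.map_pow, hA, Ideal.map_span, Set.image_singleton]
  have hϖn : ϖ ^ n ∈ maximalIdeal A :=
    Ideal.pow_mem_of_mem _ ((mem_maximalIdeal ϖ).mpr hϖ.not_isUnit) n hn
  rw [Um_eq_map, Um_eq_map, Subgroup.map_map, unitsMap_norm_comp_unitsMap_algebraMap A K B L,
    ← Subgroup.map_map, hA, hB, le_antisymm (map_norm_principalUnits_span_le (A := A) _)
      (le_map_norm_principalUnits_span he hϖn)]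

theorem norm_units_filtration_of_unramified_abelian_general
    (A : Type*) [CommRing A] [IsDomain A] [IsDiscreteValuationRing A] [HenselianLocalRing A]
    (K : Type*) [Field K] [Algebra A K] [IsFractionRing A K]
    (B : Type*) [CommRing B] [IsDomain B] [IsDiscreteValuationRing B]
    (L : Type*) [Field L] [Algebra B L] [IsFractionRing B L]
    [Algebra K L] [Algebra A L] [Algebra A B]
    [IsScalarTower A K L] [IsScalarTower A B L]
    [FiniteDimensional K L] [IsGalois K L]
    [IsIntegralClosure B A L]
    [IsLocalHom (algebraMap A B)]
    -- unramifiedness: `𝔪_A` generates `𝔪_B` …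
    (hram : (IsLocalRing.maximalIdeal A).map (algebraMap A B) = IsLocalRing.maximalIdeal B)
    -- … and the residue field extension is separable of degree `[L:K]`
    (hres : letI := (IsLocalRing.ResidueField.map (algebraMap A B)).toAlgebra
      Algebra.IsSeparable (IsLocalRing.ResidueField A) (IsLocalRing.ResidueField B) ∧
      Module.finrank (IsLocalRing.ResidueField A) (IsLocalRing.ResidueField B) =
        Module.finrank K L) :
    (∀ n : ℕ, 1 ≤ n →
      Subgroup.map (Units.map (Algebra.norm K : L →* K)) (Um B L n) = Um A K n) ∧
    (∃ n : ℕ, Um A K n ≤ (Units.map (Algebra.norm K : L →* K)).range) := by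
  have : Module.IsTorsionFree A L := .trans_faithfulSMul A K L
  have : Module.Finite A B := IsIntegralClosure.finite A K L B
  have : Module.Free A B := IsIntegralClosure.module_free A K L B
  have : IsLocalization (Algebra.algebraMapSubmonoid B A⁰) L :=
    IsIntegralClosure.isLocalization A K L B
  have : Algebra.IsSeparable (ResidueField A) (ResidueField B) :=
    ResidueField.toAlgebra_map_algebraMap A B ▸ hres.1
  obtain ⟨e, he⟩ := exists_isUnit_trace (A := A) hram
  have hmain := fun n (hn : 1 ≤ n) ↦ map_norm_Um A K B L hram he hn
  exact ⟨hmain, 1, hmain 1 le_rfl ▸ Subgroup.map_le_range _ _⟩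

/-- Let `L/K` be a finite unramified abelian extension of a Henselian
discrete valuation field `K` (with valuation ring `A`, and `B` the valuation ring of `L`,
the integral closure of `A` in `L`; unramified means the maximal ideal of `A` generates
that of `B` and the residue extension is separable of degree `[L:K]`).  Then for every
`n ≥ 1` the norm map satisfies `N_{L/K}(U_n(L)) = U_n(K)`.  In particular the norm
subgroup `N_{L/K}(L^×)` is an open subgroup of `K^×` (for the topology in which the
`U_n(K)` form a fundamental system of neighbourhoods of `1`, i.e. it contains some
`U_n(K)`). -/
theorem norm_units_filtration_of_unramified_abelian
    (A : Type*) [CommRing A] [IsDomain A] [IsDiscreteValuationRing A] [HenselianLocalRing A]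
    (K : Type*) [Field K] [Algebra A K] [IsFractionRing A K]
    (B : Type*) [CommRing B] [IsDomain B] [IsDiscreteValuationRing B]
    (L : Type*) [Field L] [Algebra B L] [IsFractionRing B L]
    [Algebra K L] [Algebra A L] [Algebra A B]
    [IsScalarTower A K L] [IsScalarTower A B L]
    [FiniteDimensional K L] [IsGalois K L]
    (habelian : ∀ σ τ : L ≃ₐ[K] L, σ * τ = τ * σ)
    [IsIntegralClosure B A L]
    [IsLocalHom (algebraMap A B)]
    -- unramifiedness: `𝔪_A` generates `𝔪_B` …
    (hram : (IsLocalRing.maximalIdeal A).map (algebraMap A B) = IsLocalRing.maximalIdeal B)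
    -- … and the residue field extension is separable of degree `[L:K]`
    (hres : letI := (IsLocalRing.ResidueField.map (algebraMap A B)).toAlgebra
      Algebra.IsSeparable (IsLocalRing.ResidueField A) (IsLocalRing.ResidueField B) ∧
      Module.finrank (IsLocalRing.ResidueField A) (IsLocalRing.ResidueField B) =
        Module.finrank K L) :
    (∀ n : ℕ, 1 ≤ n →
      Subgroup.map (Units.map (Algebra.norm K : L →* K)) (Um B L n) = Um A K n) ∧
    (∃ n : ℕ, Um A K n ≤ (Units.map (Algebra.norm K : L →* K)).range) :=
  norm_units_filtration_of_unramified_abelian_general A K B L hram hres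
end

section
/- Let L/K be a finite cyclic extension of a Henselian discrete valuation field K. Then the norm subgroup N_{L/K}(L^×) is an open subgroup of K^×. -/
/-!
Pick `α ∈ O_L` with `c = Tr_{L/K}(α) ≠ 0`. As `L/K` is Galois,
`t ↦ N_{L/K}(1 + tα) = ∏_σ (1 + t σ(α))` is a polynomial `f ∈ O_K[t]` with `f(0) = 1` and
`f'(0) = c`. By Newton's form of Hensel's lemma `f(t) = v` is solvable for every
`v ∈ 1 + c² 𝔪_K`, a set containing `U_n(K)` for `n` large.
-/

open Polynomial IsLocalRing

theorem Polynomial.eval_eq_coeff_zero_add_coeff_one_mul_add_sq_mul {R : Type*} [CommRing R]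
    (f : R[X]) (x : R) :
    f.eval x = f.coeff 0 + f.coeff 1 * x + x ^ 2 * f.divX.divX.eval x := by
  conv_lhs => rw [← X_mul_divX_add f, ← X_mul_divX_add f.divX]
  simp only [eval_add, eval_mul, eval_X, eval_C, coeff_divX]
  ring

namespace HenselianLocalRing

variable {R : Type*} [CommRing R] [HenselianLocalRing R]

theorem exists_isRoot_of_map_residue_eq_X_add_one {f : R[X]} (h0 : f.coeff 0 = 1)
    (hf : f.map (residue R) = X + 1) : ∃ s, f.IsRoot s := by
  -- The reflection of `f` is monic with reduction `X^M (1 + X)`: Hensel lifts its simple root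
  -- `-1` to a unit, whose inverse is a root of `f`.
  set N := f.natDegree
  obtain ⟨M, hM⟩ : ∃ M, N = M + 1 := by
    refine Nat.exists_eq_add_one.mpr ?_
    have := natDegree_map_le (f := residue R) (p := f)
    rw [hf, ← C_1, natDegree_X_add_C] at this
    omega
  have hmonic : (f.reflect N).Monic :=
    monic_of_natDegree_le_of_coeff_eq_one N (natDegree_reflect_le.trans (max_le le_rfl le_rfl))
      (by rw [coeff_reflect, revAt_le le_rfl, Nat.sub_self, h0])
  have hmap : (f.reflect N).map (residue R) = X ^ M * (1 + X) := by
    rw [← reflect_map, hf, hM, ← one_mul (X + 1 : (ResidueField R)[X]), ← C_1,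
      reflect_mul (F := M) (G := 1) _ _ (by simp) (natDegree_X_add_C 1).le, C_1, reflect_one,
      reflect_add, reflect_one_X, ← C_1, reflect_C, pow_one, C_1, one_mul]
  obtain ⟨a, ha, ha1⟩ := is_henselian _ hmonic (-1)
    (by rw [← residue_eq_zero_iff, ← eval_map_apply, hmap]; simp)
    (by
      rw [← residue_ne_zero_iff_isUnit, ← eval_map_apply, ← derivative_map, hmap]
      simp)
  have hu : IsUnit a := by
    rw [← residue_ne_zero_iff_isUnit]
    rw [sub_neg_eq_add, ← residue_eq_zero_iff, map_add, map_one, add_eq_zero_iff_eq_neg] at ha1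
    simp [ha1]
  obtain ⟨u, rfl⟩ := hu
  let _ : Invertible (↑u⁻¹ : R) := Units.invertible u⁻¹
  refine ⟨↑u⁻¹, (eval₂_reflect_eq_zero_iff (RingHom.id R) _ N f le_rfl).mp ?_⟩
  simpa using ha

/-- Newton's form of Hensel's lemma at `0`, where `f'(0) = f.coeff 1`. -/
theorem exists_eval_eq_of_coeff_zero_sub_eq (f : R[X]) {v e : R} (he : e ∈ maximalIdeal R)
    (hv : f.coeff 0 - v = f.coeff 1 ^ 2 * e) : ∃ t, f.eval t = v := by
  set c := f.coeff 1
  -- `G` is made so that `f (c e s) - v = c² e G(s)` and `G ≡ X + 1` modulo `𝔪`.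
  set G : R[X] := X + 1 + C e * X ^ 2 * f.divX.divX.comp (C (c * e) * X)
  obtain ⟨s, hs⟩ := exists_isRoot_of_map_residue_eq_X_add_one (f := G) (by simp [G])
    (by simp [G, (residue_eq_zero_iff e).mpr he])
  refine ⟨c * e * s, ?_⟩
  have hG : f.eval (c * e * s) - v = c ^ 2 * e * G.eval s := by
    simp only [eval_eq_coeff_zero_add_coeff_one_mul_add_sq_mul f, G, eval_add, eval_mul, eval_X,
      eval_C, eval_one, eval_pow, eval_comp]
    linear_combination hv
  rw [hs.eq_zero, mul_zero, sub_eq_zero] at hG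
  exact hG

end HenselianLocalRing

theorem Polynomial.coeff_zero_prod_C_mul_X_add_one {R ι : Type*} [CommRing R] (s : Finset ι)
    (a : ι → R) : (∏ i ∈ s, (C (a i) * X + 1)).coeff 0 = 1 := by
  simp [coeff_zero_eq_eval_zero, eval_prod]

theorem Polynomial.coeff_one_prod_C_mul_X_add_one {R ι : Type*} [CommRing R] (s : Finset ι)
    (a : ι → R) : (∏ i ∈ s, (C (a i) * X + 1)).coeff 1 = ∑ i ∈ s, a i := by
  classical
  induction s using Finset.induction_on with
  | empty => simp [coeff_one]
  | insert i s hi ih =>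
    rw [Finset.prod_insert hi, Finset.sum_insert hi, add_mul, one_mul, mul_assoc, coeff_add,
      coeff_C_mul, coeff_X_mul, coeff_zero_prod_C_mul_X_add_one, ih, mul_one]

section

variable (A : Type*) {K L : Type*} [CommRing A] [Field K] [Field L] [Algebra A K]
  [IsFractionRing A K] [Algebra K L] [Algebra A L] [IsScalarTower A K L] [FiniteDimensional K L]

theorem exists_isIntegral_trace_ne_zero [IsDomain A] [Algebra.IsSeparable K L] :
    ∃ α : L, IsIntegral A α ∧ Algebra.trace K L α ≠ 0 := by
  obtain ⟨β, hβ⟩ : ∃ β : L, Algebra.trace K L β ≠ 0 := by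
    by_contra! h
    exact Algebra.trace_ne_zero K L (LinearMap.ext h)
  obtain ⟨y, hy, hint⟩ := exists_integral_multiples A K {β}
  refine ⟨y • β, hint β (Finset.mem_singleton_self β), ?_⟩
  rw [← algebraMap_smul K, map_smul]
  exact smul_ne_zero (IsFractionRing.to_map_ne_zero_of_mem_nonZeroDivisors
    (mem_nonZeroDivisors_of_ne_zero hy)) hβ

variable [IsGalois K L]

theorem mem_range_algebraMap_of_isIntegral_of_forall_fixed [IsIntegrallyClosed A] {x : L}
    (hx : IsIntegral A x) (hfix : ∀ σ : L ≃ₐ[K] L, σ x = x) :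
    x ∈ Set.range (algebraMap A L) := by
  obtain ⟨k, rfl⟩ := (IsGalois.mem_range_algebraMap_iff_fixed x).mpr hfix
  obtain ⟨a, rfl⟩ := IsIntegrallyClosed.isIntegral_iff.mp
    ((isIntegral_algebraMap_iff (algebraMap K L).injective).mp hx)
  exact ⟨a, IsScalarTower.algebraMap_apply A K L a⟩

theorem exists_polynomial_eval_eq_norm_one_add_mul [IsIntegrallyClosed A] {α : L}
    (hα : IsIntegral A α) :
    ∃ f : A[X], f.coeff 0 = 1 ∧ algebraMap A K (f.coeff 1) = Algebra.trace K L α ∧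
      ∀ t : A, algebraMap A K (f.eval t) = Algebra.norm K (1 + algebraMap A L t * α) := by
  set Q : L[X] := ∏ σ : L ≃ₐ[K] L, (C (σ α) * X + 1)
  have hfix : ∀ τ : L ≃ₐ[K] L, Q.map (τ : L →+* L) = Q := fun τ => by
    rw [Polynomial.map_prod]
    refine Fintype.prod_equiv (Equiv.mulLeft τ) _ _ fun σ => ?_
    simp [AlgEquiv.mul_apply]
  have hint : ∀ i, IsIntegral A (Q.coeff i) := by
    have hQ : Q = (∏ σ : L ≃ₐ[K] L,
        (C (⟨σ α, hα.map σ⟩ : integralClosure A L) * X + 1)).map (algebraMap _ L) := by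
      simp [Q, Polynomial.map_prod]
    intro i
    rw [hQ, coeff_map]
    exact Subtype.prop _
  obtain ⟨f, hf⟩ := (mem_lifts Q).mp <| (lifts_iff_coeff_lifts Q).mpr fun i =>
    mem_range_algebraMap_of_isIntegral_of_forall_fixed A (hint i) fun τ => by
      conv_rhs => rw [← hfix τ]
      rw [coeff_map]; rfl
  have hcoeff : ∀ i, algebraMap K L (algebraMap A K (f.coeff i)) = Q.coeff i := fun i => by
    rw [← IsScalarTower.algebraMap_apply, ← coeff_map, hf]
  refine ⟨f, ?_, ?_, fun t => ?_⟩
  · apply (algebraMap K L).injective.comp (IsFractionRing.injective A K)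
    simp only [Function.comp_apply, hcoeff, map_one]
    exact coeff_zero_prod_C_mul_X_add_one _ _
  · apply (algebraMap K L).injective
    rw [hcoeff, coeff_one_prod_C_mul_X_add_one, trace_eq_sum_automorphisms]
  · apply (algebraMap K L).injective
    rw [Algebra.norm_eq_prod_automorphisms, ← IsScalarTower.algebraMap_apply, ← eval_map_apply,
      hf, eval_prod]
    refine Finset.prod_congr rfl fun σ _ => ?_
    simp [IsScalarTower.algebraMap_apply A K L]
    ring

end

theorem Algebra.mem_range_unitsMap_norm_of_norm_eq {K L : Type*} [Field K] [Field L]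
    [Algebra K L] [FiniteDimensional K L] {u : Kˣ} {y : L} (h : Algebra.norm K y = u) :
    u ∈ (Units.map (Algebra.norm K : L →* K)).range := by
  have hy : y ≠ 0 := by
    rintro rfl
    exact u.ne_zero (by rw [← h, Algebra.norm_zero])
  exact ⟨Units.mk0 y hy, Units.ext h⟩

theorem norm_subgroup_open_of_cyclic_general
    (A : Type*) [CommRing A] [IsDomain A] [IsDiscreteValuationRing A] [HenselianLocalRing A]
    (K : Type*) [Field K] [Algebra A K] [IsFractionRing A K]
    (L : Type*) [Field L] [Algebra K L] [FiniteDimensional K L] [IsGalois K L] :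
    ∃ n : ℕ, Um A K n ≤ (Units.map (Algebra.norm K : L →* K)).range := by
  let _ : Algebra A L := ((algebraMap K L).comp (algebraMap A K)).toAlgebra
  have _ : IsScalarTower A K L := IsScalarTower.of_algebraMap_eq fun _ => rfl
  obtain ⟨α, hαint, hα⟩ := exists_isIntegral_trace_ne_zero A (K := K) (L := L)
  obtain ⟨f, hf0, hf1, hfnorm⟩ := exists_polynomial_eval_eq_norm_one_add_mul A (K := K) hαint
  have hc : f.coeff 1 ≠ 0 := by
    intro h
    exact hα (by rw [← hf1, h, map_zero])
  obtain ⟨n, hn⟩ := exists_maximalIdeal_pow_eq_of_principal A (IsPrincipalIdealRing.principal _)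
    (Ideal.span {f.coeff 1 ^ 2} * maximalIdeal A) (by
      simp [hc, IsDiscreteValuationRing.not_a_field])
  refine ⟨n, (Subgroup.closure_le _).mpr ?_⟩
  rintro u ⟨v, hvu, hv⟩
  obtain ⟨e, he, hve⟩ := Ideal.mem_span_singleton_mul.mp (hn ▸ hv)
  obtain ⟨t, ht⟩ := HenselianLocalRing.exists_eval_eq_of_coeff_zero_sub_eq f
    (neg_mem he) (v := v) (by linear_combination hf0 + hve)
  exact Algebra.mem_range_unitsMap_norm_of_norm_eq (by rw [← hvu, ← ht, hfnorm])

/-- Let `L/K` be a finite cyclic (Galois) extension of a Henselian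
discrete valuation field `K` (with valuation ring `A`).  Then the norm subgroup
`N_{L/K}(L^×)` is an open subgroup of `K^×` — for the topology in which the `U_n(K)`
form a fundamental system of neighbourhoods of `1`, this means that it contains `U_n(K)`
for some `n`. -/
theorem norm_subgroup_open_of_cyclic
    (A : Type*) [CommRing A] [IsDomain A] [IsDiscreteValuationRing A] [HenselianLocalRing A]
    (K : Type*) [Field K] [Algebra A K] [IsFractionRing A K]
    (L : Type*) [Field L] [Algebra K L] [FiniteDimensional K L] [IsGalois K L]
    [IsCyclic (L ≃ₐ[K] L)] :
    ∃ n : ℕ, Um A K n ≤ (Units.map (Algebra.norm K : L →* K)).range :=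
  norm_subgroup_open_of_cyclic_general A K L
end
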